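/- Let Ai, Bi satisfy the Airy equation with Wronskian Ai·Bi' − Ai'·Bi = 1/π. Then M̃ = (H̃₁·H̃₂)^{-1}, with H̃₁ = Ai(v)z + Ai'(v) and H̃₂ = Bi(v)z + Bi'(v), is an integrating factor of the system v' = 1, z' = z² − v on any open set where H̃₁H̃₂ ≠ 0; i.e., ∂_v(M̃) + ∂_z((z² − v)·M̃) = 0. -/

import Mathlib

theorem airy_integrating_factor
    (Ai Bi : ℝ → ℝ) (hAi : ContDiff ℝ (⊤ : ℕ∞) Ai) (hBi : ContDiff ℝ (⊤ : ℕ∞) Bi)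
    (hODE₁ : ∀ v, deriv (deriv Ai) v = v * Ai v)
    (hODE₂ : ∀ v, deriv (deriv Bi) v = v * Bi v)
    (hWron : ∀ v, Ai v * deriv Bi v - deriv Ai v * Bi v = 1 / Real.pi) :
    ∀ v z : ℝ,
      (Ai v * z + deriv Ai v) * (Bi v * z + deriv Bi v) ≠ 0 →
      deriv (fun v =>
          ((Ai v * z + deriv Ai v) * (Bi v * z + deriv Bi v))⁻¹) v
        + deriv (fun z => (z ^ 2 - v) *
          ((Ai v * z + deriv Ai v) * (Bi v * z + deriv Bi v))⁻¹) z
      = 0 := by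
  intro v z h
  have hA : HasDerivAt Ai (deriv Ai v) v :=
    (hAi.differentiable (by simp) v).hasDerivAt
  have hB : HasDerivAt Bi (deriv Bi v) v :=
    (hBi.differentiable (by simp) v).hasDerivAt
  have hdAi : ContDiff ℝ (⊤:ℕ∞) (deriv Ai) := (contDiff_infty_iff_deriv.mp (hAi.of_le (mod_cast le_top))).2
  have hdBi : ContDiff ℝ (⊤:ℕ∞) (deriv Bi) := (contDiff_infty_iff_deriv.mp (hBi.of_le (mod_cast le_top))).2
  have hA' : HasDerivAt (deriv Ai) (v * Ai v) v := by
    have := (hdAi.differentiable (by norm_num) v).hasDerivAt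
    rwa [hODE₁] at this
  have hB' : HasDerivAt (deriv Bi) (v * Bi v) v := by
    have := (hdBi.differentiable (by norm_num) v).hasDerivAt
    rwa [hODE₂] at this
  -- derivative in v
  have h1 : HasDerivAt (fun v => Ai v * z + deriv Ai v)
      (deriv Ai v * z + v * Ai v) v := (hA.mul_const z).add hA'
  have h2 : HasDerivAt (fun v => Bi v * z + deriv Bi v)
      (deriv Bi v * z + v * Bi v) v := (hB.mul_const z).add hB'
  have hH : HasDerivAt
      (fun v => (Ai v * z + deriv Ai v) * (Bi v * z + deriv Bi v))
      ((deriv Ai v * z + v * Ai v) * (Bi v * z + deriv Bi v)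
        + (Ai v * z + deriv Ai v) * (deriv Bi v * z + v * Bi v)) v := h1.mul h2
  have hInv : deriv (fun v =>
      ((Ai v * z + deriv Ai v) * (Bi v * z + deriv Bi v))⁻¹) v = _ := (hH.inv h).deriv
  -- derivative in z
  have k1 : HasDerivAt (fun z : ℝ => Ai v * z + deriv Ai v) (Ai v) z := by
    simpa using ((hasDerivAt_id z).const_mul (Ai v)).add_const (deriv Ai v)
  have k2 : HasDerivAt (fun z : ℝ => Bi v * z + deriv Bi v) (Bi v) z := by
    simpa using ((hasDerivAt_id z).const_mul (Bi v)).add_const (deriv Bi v)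
  have kH : HasDerivAt
      (fun z => (Ai v * z + deriv Ai v) * (Bi v * z + deriv Bi v))
      (Ai v * (Bi v * z + deriv Bi v) + (Ai v * z + deriv Ai v) * Bi v) z :=
    k1.mul k2
  have kq : HasDerivAt (fun z : ℝ => z ^ 2 - v) (2 * z) z := by
    simpa using (hasDerivAt_pow 2 z).sub_const v
  have kfull : deriv (fun z => (z ^ 2 - v) *
      ((Ai v * z + deriv Ai v) * (Bi v * z + deriv Bi v))⁻¹) z = _ := (kq.mul (kH.inv h)).deriv
  rw [hInv, kfull, Pi.inv_apply]
  have h1ne : Ai v * z + deriv Ai v ≠ 0 := fun hx => h (by rw [hx]; ring)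
  have h2ne : Bi v * z + deriv Bi v ≠ 0 := fun hx => h (by rw [hx]; ring)
  field_simp
  ring
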